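/- There exist constants C > 0 and c > 0 such that for every integer n ≥ 1 there exist real polynomials p_0, p_1, …, p_{n−1} with deg p_k ≤ n − k for each k, such that: (i) for each k with 0 ≤ k ≤ n−1 and every x ∈ [2^{−k−1}, 2^{−k}], |√x − p_k(x)| ≤ C·exp(−c·n); and (ii) for every x ∈ [0, 2^{−n}], √x ≤ C·exp(−c·n). Consequently the piecewise polynomial equal to p_k on the k-th dyadic interval and to 0 on [0, 2^{−n}] approximates √x on [0,1] with error at most C·exp(−c·n), using polynomial degrees that decrease linearly toward the singularity. -/

import Mathlib

/-!
On `[a/2, a]` substitute `x = (3a/4)(1 + t)`, so that `|t| ≤ 1/3` and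
`√x = √(3a/4) · √(1 + t)`. The binomial series of `√(1 + t)` has coefficients of modulus at
most `1`, so its truncation at degree `m` has error at most `3^{-m}/2 ≤ 2^{-m}`. On the `k`-th
dyadic interval (`a = 2^{-k}`, `m = n - k`) this gives the error
`2^{-k/2} · 2^{-(n-k)} ≤ 2^{-n/2}`, and on `[0, 2^{-n}]` one has `√x ≤ 2^{-n/2}` trivially;
take `C = 1` and `c = log 2 / 2`.
-/

open Polynomial Set

theorem Ring.choose_succ_right_eq {K : Type*} [Field K] [CharZero K] (a : K) (n : ℕ) :
    Ring.choose a (n + 1) * (n + 1) = Ring.choose a n * (a - n) := by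
  rw [Ring.choose_eq_smul, Ring.choose_eq_smul, descPochhammer_succ_right]
  simp [smeval_mul, Nat.factorial_succ, smeval_natCast, field]

theorem Ring.abs_choose_le_one {a : ℝ} (ha : |a| ≤ 1) (n : ℕ) : |Ring.choose a n| ≤ 1 := by
  induction n with
  | zero => simp
  | succ n ih =>
    have hn : (0 : ℝ) < n + 1 := by positivity
    have hstep : |a - n| ≤ n + 1 := (abs_sub _ _).trans (by simp only [Nat.abs_cast]; linarith)
    refine le_of_mul_le_mul_right ?_ hn
    calc |Ring.choose a (n + 1)| * (n + 1) = |Ring.choose a n| * |a - n| := by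
          rw [← abs_of_pos hn, ← abs_mul, Ring.choose_succ_right_eq, abs_mul]
      _ ≤ 1 * (n + 1) := mul_le_mul ih hstep (abs_nonneg _) zero_le_one

noncomputable def binomialSeriesTrunc (a : ℝ) (m : ℕ) : ℝ[X] :=
  ∑ j ∈ Finset.range (m + 1), C (Ring.choose a j) * X ^ j

theorem natDegree_binomialSeriesTrunc_le (a : ℝ) (m : ℕ) :
    (binomialSeriesTrunc a m).natDegree ≤ m := by
  refine natDegree_sum_le_of_forall_le _ _ fun j hj => ?_
  exact (natDegree_C_mul_X_pow_le _ _).trans (Finset.mem_range_succ_iff.mp hj)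

theorem eval_binomialSeriesTrunc (a t : ℝ) (m : ℕ) :
    (binomialSeriesTrunc a m).eval t = ∑ j ∈ Finset.range (m + 1), Ring.choose a j * t ^ j := by
  simp [binomialSeriesTrunc, eval_finsetSum]

theorem Real.hasSum_choose_mul_pow {a t : ℝ} (ht : |t| < 1) :
    HasSum (fun j => Ring.choose a j * t ^ j) ((1 + t) ^ a) := by
  have h := (Real.one_add_rpow_hasFPowerSeriesOnBall_zero (a := a)).hasSum (y := t)
    (by simpa [edist_dist, ← ENNReal.ofReal_one] using ht)
  simpa [binomialSeries, FormalMultilinearSeries.ofScalars_apply_eq, mul_comm] using h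

theorem abs_one_add_rpow_sub_eval_binomialSeriesTrunc_le {a t r : ℝ} (ha : |a| ≤ 1)
    (ht : |t| ≤ r) (hr : r < 1) (m : ℕ) :
    |(1 + t) ^ a - (binomialSeriesTrunc a m).eval t| ≤ r ^ (m + 1) / (1 - r) := by
  have htail := (hasSum_nat_add_iff' (m + 1)).mpr
    (Real.hasSum_choose_mul_pow (a := a) (ht.trans_lt hr))
  have hgeom : HasSum (fun j => r ^ (m + 1) * r ^ j) (r ^ (m + 1) * (1 - r)⁻¹) :=
    (hasSum_geometric_of_lt_one ((abs_nonneg t).trans ht) hr).mul_left _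
  rw [eval_binomialSeriesTrunc, ← Real.norm_eq_abs, div_eq_mul_inv]
  refine htail.norm_le_of_bounded hgeom fun j => ?_
  rw [Real.norm_eq_abs, abs_mul, abs_pow, ← pow_add, add_comm (m + 1)]
  calc |Ring.choose a (j + (m + 1))| * |t| ^ (j + (m + 1)) ≤ 1 * r ^ (j + (m + 1)) :=
        mul_le_mul (Ring.abs_choose_le_one ha _) (pow_le_pow_left₀ (abs_nonneg t) ht _)
          (by positivity) zero_le_one
    _ = _ := one_mul _

theorem exists_polynomial_abs_sqrt_sub_eval_le_on_Icc_half {a : ℝ} (ha : 0 < a) (m : ℕ) :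
    ∃ p : ℝ[X], p.natDegree ≤ m ∧
      ∀ x ∈ Icc (a / 2) a, |√x - p.eval x| ≤ √a * (1 / 2) ^ m := by
  set q := binomialSeriesTrunc (1 / 2) m
  -- `t = L x` maps `[a/2, a]` onto `[-1/3, 1/3]`, and `x = (3a/4)(1 + t)`.
  set L : ℝ[X] := C (4 / (3 * a)) * X + C (-1)
  refine ⟨C √(3 * a / 4) * q.comp L, ?_, ?_⟩
  · calc _ ≤ q.natDegree * L.natDegree := (natDegree_C_mul_le _ _).trans natDegree_comp_le
      _ ≤ m * 1 := Nat.mul_le_mul (natDegree_binomialSeriesTrunc_le _ _) natDegree_linear_le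
      _ = m := mul_one m
  · rintro x ⟨hx₁, hx₂⟩
    have hLx : L.eval x = 4 / (3 * a) * x - 1 := by simp [L, sub_eq_add_neg]
    have ht : |L.eval x| ≤ 1 / 3 := by
      rw [abs_le, hLx]
      constructor
      · rw [← sub_nonneg]; field_simp; linarith
      · rw [← sub_nonneg]; field_simp; linarith
    have hsqrt : √x = √(3 * a / 4) * √(1 + L.eval x) := by
      rw [← Real.sqrt_mul (by positivity), hLx]; field_simp; ring_nf
    have hrem := abs_one_add_rpow_sub_eval_binomialSeriesTrunc_le (a := 1 / 2)
      (by norm_num [abs_of_pos]) ht (by norm_num) m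
    rw [← Real.sqrt_eq_rpow] at hrem
    rw [eval_mul, eval_C, eval_comp, hsqrt, ← mul_sub, abs_mul, abs_of_nonneg (by positivity)]
    refine mul_le_mul (Real.sqrt_le_sqrt (by linarith)) (hrem.trans ?_) (abs_nonneg _)
      (Real.sqrt_nonneg _)
    calc (1 / 3 : ℝ) ^ (m + 1) / (1 - 1 / 3) = (1 / 3) ^ m / 2 := by ring
      _ ≤ (1 / 2) ^ m := by
        have : (1 / 3 : ℝ) ^ m ≤ (1 / 2) ^ m := pow_le_pow_left₀ (by norm_num) (by norm_num) m
        linarith [pow_nonneg (by norm_num : (0 : ℝ) ≤ 1 / 3) m]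

theorem exp_neg_half_log_two_mul (n : ℕ) :
    Real.exp (-(Real.log 2 / 2) * n) = √((2 : ℝ) ^ (-(n : ℤ))) := by
  rw [Real.sqrt_eq_rpow, ← Real.rpow_intCast, ← Real.rpow_mul zero_le_two,
    Real.rpow_def_of_pos two_pos]
  push_cast
  ring_nf

theorem sqrt_two_zpow_neg_mul_half_pow_le {k n : ℕ} (hk : k ≤ n) :
    √((2 : ℝ) ^ (-(k : ℤ))) * (1 / 2) ^ (n - k) ≤ √((2 : ℝ) ^ (-(n : ℤ))) := by
  have hsplit : (2 : ℝ) ^ (-(n : ℤ)) = 2 ^ (-(k : ℤ)) * (1 / 2) ^ (n - k) := by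
    rw [one_div, inv_pow, ← zpow_natCast, ← zpow_neg, ← zpow_add₀ two_ne_zero]
    congr 1
    omega
  rw [hsplit, Real.sqrt_mul (by positivity)]
  refine mul_le_mul_of_nonneg_left ((Real.le_sqrt (by positivity) (by positivity)).mpr ?_)
    (Real.sqrt_nonneg _)
  exact pow_le_of_le_one (by positivity) (pow_le_one₀ (by norm_num) (by norm_num)) two_ne_zero

/-- One-dimensional hp mesh refinement (DeVore–Scherer type): `√x` is approximated
on the dyadic intervals `[2^{-k-1}, 2^{-k}]` by polynomials of degree at most `n - k`
with error `C·exp(-c·n)`, and `√x ≤ C·exp(-c·n)` on `[0, 2^{-n}]`. -/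
theorem hp_mesh_refinement_sqrt :
    ∃ C : ℝ, 0 < C ∧ ∃ c : ℝ, 0 < c ∧
      ∀ n : ℕ, 1 ≤ n →
        ∃ p : ℕ → Polynomial ℝ,
          (∀ k < n, (p k).natDegree ≤ n - k) ∧
          (∀ k < n, ∀ x ∈ Set.Icc ((2 : ℝ) ^ (-(k : ℤ) - 1)) ((2 : ℝ) ^ (-(k : ℤ))),
            |Real.sqrt x - (p k).eval x| ≤ C * Real.exp (-c * n)) ∧
          (∀ x ∈ Set.Icc (0 : ℝ) ((2 : ℝ) ^ (-(n : ℤ))),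
            Real.sqrt x ≤ C * Real.exp (-c * n)) := by
  refine ⟨1, one_pos, Real.log 2 / 2, by positivity, fun n _ => ?_⟩
  choose p hdeg happrox using fun k : ℕ =>
    exists_polynomial_abs_sqrt_sub_eval_le_on_Icc_half (zpow_pos (two_pos (α := ℝ)) (-(k : ℤ)))
      (n - k)
  refine ⟨p, fun k _ => hdeg k, fun k hk x hx => ?_, fun x hx => ?_⟩
  · rw [zpow_sub_one₀ two_ne_zero, ← div_eq_mul_inv] at hx
    rw [one_mul, exp_neg_half_log_two_mul]
    exact (happrox k x hx).trans (sqrt_two_zpow_neg_mul_half_pow_le hk.le)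
  · rw [one_mul, exp_neg_half_log_two_mul]
    exact Real.sqrt_le_sqrt hx.2
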